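/- (Lemma: the implementation pre-order is preserved by closure of left concatenation.) For all languages L1, L2, L3, L4 of traces, if L2 ⊑ L1 and closure(L1 · L4) ⊑ L3, then closure(L2 · L4) ⊑ L3. -/
import Mathlib


namespace MultiPartySessions

/-- An interaction: a finite nonempty set of senders, a receiver not among them,
and a message type. -/
structure Interaction (R M : Type*) where
  senders : Finset R
  receiver : R
  msg : M
  senders_nonempty : senders.Nonempty
  receiver_not_mem : receiver ∉ senders

/-- A trace is a finite list of interactions. -/
abbrev Trace (R M : Type*) := List (Interaction R M)

/-- A language is a set of traces. -/
abbrev Lang (R M : Type*) := Set (Trace R M)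

variable {R M V : Type*}

/-- Permutation closure of a language. -/
def perm (L : Lang R M) : Lang R M := {w | ∃ v ∈ L, w.Perm v}

/-- A language of traces is well formed if whenever φ·(π→p:a)·(π'→p':b)·ψ belongs to it,
either p ∈ π' ∪ {p'} or the trace with the two interactions swapped also belongs to it. -/
def WellFormedL (L : Lang R M) : Prop :=
  ∀ (φ ψ : Trace R M) (α β : Interaction R M),
    (φ ++ α :: β :: ψ) ∈ L →
    (α.receiver ∈ β.senders ∨ α.receiver = β.receiver) ∨ (φ ++ β :: α :: ψ) ∈ L

/-- The smallest well-formed superset of a language. -/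
def closure (L : Lang R M) : Lang R M :=
  {w | ∀ K : Lang R M, L ⊆ K → WellFormedL K → w ∈ K}

/-- `IsShuffle v₁ v₂ w` holds iff `w` is an interleaving of `v₁` and `v₂`. -/
inductive IsShuffle {α : Type*} : List α → List α → List α → Prop
  | nil : IsShuffle [] [] []
  | left {a : α} {l₁ l₂ l : List α} : IsShuffle l₁ l₂ l → IsShuffle (a :: l₁) l₂ (a :: l)
  | right {a : α} {l₁ l₂ l : List α} : IsShuffle l₁ l₂ l → IsShuffle l₁ (a :: l₂) (a :: l)

/-- Shuffle of two languages. -/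
def shuffleL (L₁ L₂ : Lang R M) : Lang R M :=
  {w | ∃ v₁ ∈ L₁, ∃ v₂ ∈ L₂, IsShuffle v₁ v₂ w}

/-- Elementwise concatenation of two languages. -/
def catL (L₁ L₂ : Lang R M) : Lang R M :=
  {w | ∃ v₁ ∈ L₁, ∃ v₂ ∈ L₂, w = v₁ ++ v₂}

/-- Kleene star of a language. -/
def starL (L : Lang R M) : Lang R M :=
  {w | ∃ vs : List (Trace R M), w = vs.flatten ∧ ∀ v ∈ vs, v ∈ L}

/-- Global types. -/
inductive GlobalType (R M : Type*) where
  | skip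
  | act (α : Interaction R M)
  | seq (g₁ g₂ : GlobalType R M)
  | par (g₁ g₂ : GlobalType R M)
  | alt (g₁ g₂ : GlobalType R M)
  | star (g : GlobalType R M)

/-- Trace language of a global type. -/
def trG : GlobalType R M → Lang R M
  | .skip => {[]}
  | .act a => {[a]}
  | .seq g₁ g₂ => catL (trG g₁) (trG g₂)
  | .par g₁ g₂ => shuffleL (trG g₁) (trG g₂)
  | .alt g₁ g₂ => trG g₁ ∪ trG g₂
  | .star g => starL (trG g)

/-- Pre-session types. -/
inductive PST (R M V : Type*) where
  | done
  | var (X : V)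
  | out (p : R) (a : M) (T : PST R M V)
  | inp (s : Finset R) (a : M) (T : PST R M V)
  | ichoice (T S : PST R M V)
  | echoice (T S : PST R M V)
  | mu (X : V) (T : PST R M V)

/-- Capture-avoiding simultaneous substitution of recursion variables
(intended usage: the substituted types are closed). -/
def substAll [DecidableEq V] (ρ : V → PST R M V) : PST R M V → PST R M V
  | .done => .done
  | .var X => ρ X
  | .out p a T => .out p a (substAll ρ T)
  | .inp s a T => .inp s a (substAll ρ T)
  | .ichoice T S => .ichoice (substAll ρ T) (substAll ρ S)
  | .echoice T S => .echoice (substAll ρ T) (substAll ρ S)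
  | .mu X T => .mu X (substAll (fun Y => if Y = X then .var X else ρ Y) T)

/-- One-step unfolding of a recursive type `μX.T`. -/
def unfold [DecidableEq V] (X : V) (T : PST R M V) : PST R M V :=
  substAll (fun Y => if Y = X then .mu X T else .var Y) T

/-- Free recursion variables of a pre-session type. -/
def fv : PST R M V → Set V
  | .done => ∅
  | .var X => {X}
  | .out _ _ T => fv T
  | .inp _ _ T => fv T
  | .ichoice T S => fv T ∪ fv S
  | .echoice T S => fv T ∪ fv S
  | .mu X T => fv T \ {X}

/-- `CanOut T p a T'`: `T` offers (modulo internal choice and fold/unfold)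
the top-level output `p!a` with continuation `T'`. -/
inductive CanOut [DecidableEq V] : PST R M V → R → M → PST R M V → Prop
  | out {p : R} {a : M} {T : PST R M V} : CanOut (.out p a T) p a T
  | left {T S T' : PST R M V} {p : R} {a : M} :
      CanOut T p a T' → CanOut (.ichoice T S) p a T'
  | right {T S T' : PST R M V} {p : R} {a : M} :
      CanOut S p a T' → CanOut (.ichoice T S) p a T'
  | mu {X : V} {T T' : PST R M V} {p : R} {a : M} :
      CanOut (unfold X T) p a T' → CanOut (.mu X T) p a T'

/-- `CanIn T s a T'`: `T` offers (modulo external choice and fold/unfold)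
the top-level input `s?a` with continuation `T'`. -/
inductive CanIn [DecidableEq V] : PST R M V → Finset R → M → PST R M V → Prop
  | inp {s : Finset R} {a : M} {T : PST R M V} : CanIn (.inp s a T) s a T
  | left {T S T' : PST R M V} {s : Finset R} {a : M} :
      CanIn T s a T' → CanIn (.echoice T S) s a T'
  | right {T S T' : PST R M V} {s : Finset R} {a : M} :
      CanIn S s a T' → CanIn (.echoice T S) s a T'
  | mu {X : V} {T T' : PST R M V} {s : Finset R} {a : M} :
      CanIn (unfold X T) s a T' → CanIn (.mu X T) s a T'

/-- `T` behaves as an internal choice of outputs with pairwise distinct prefixes,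
with all continuations in `K`. -/
def OutShape [DecidableEq V] (T : PST R M V) (K : Set (PST R M V)) : Prop :=
  (∃ p a T', CanOut T p a T') ∧
  (¬ ∃ s a T', CanIn T s a T') ∧
  (∀ p a T' T'', CanOut T p a T' → CanOut T p a T'' → T' = T'') ∧
  (∀ p a T', CanOut T p a T' → T' ∈ K)

/-- `T` behaves as an external choice of inputs such that `s ⊆ s'` together with equal
messages forces equal branches, with all continuations in `K`. -/
def InShape [DecidableEq V] (T : PST R M V) (K : Set (PST R M V)) : Prop :=
  (∃ s a T', CanIn T s a T') ∧
  (¬ ∃ p a T', CanOut T p a T') ∧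
  (∀ s a T' s' T'', CanIn T s a T' → CanIn T s' a T'' → s ⊆ s' → s = s' ∧ T' = T'') ∧
  (∀ s a T', CanIn T s a T' → T' ∈ K)

/-- Session types: pre-session types that (coinductively) are either `end`, an internal
choice of outputs with pairwise distinct prefixes, or an external choice of inputs
satisfying the separation condition, all of whose continuations are again session types. -/
def IsST [DecidableEq V] (T : PST R M V) : Prop :=
  ∃ K : Set (PST R M V), T ∈ K ∧
    ∀ U ∈ K, U = PST.done ∨ OutShape U K ∨ InShape U K

/-- A buffer: a FIFO queue of message types for each ordered pair (sender, receiver). -/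
abbrev Buffer (R M : Type*) := R → R → List M

/-- A session environment, represented as a total map which is `end` outside its domain. -/
abbrev Session (R M V : Type*) := R → PST R M V

/-- The empty buffer. -/
def emptyBuf : Buffer R M := fun _ _ => []

/-- The session has a finite domain. -/
def FinDom (Δ : Session R M V) : Prop := {p | Δ p ≠ PST.done}.Finite

/-- Every role is successfully terminated. -/
def Ended (Δ : Session R M V) : Prop := ∀ p, Δ p = PST.done

/-- One reduction step of a configuration, labelled by `none` (an output, which enqueues
a message) or by `some` interaction (an input, which dequeues one message of the given
type from each sender in the interaction). -/
inductive Step [DecidableEq R] [DecidableEq V] :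
    Buffer R M → Session R M V → Option (Interaction R M) → Buffer R M → Session R M V → Prop
  | output {B : Buffer R M} {Δ : Session R M V} {p q : R} {a : M} {T' : PST R M V}
      (B' : Buffer R M) :
      CanOut (Δ p) q a T' →
      B' p q = B p q ++ [a] →
      (∀ s r, ¬(s = p ∧ r = q) → B' s r = B s r) →
      Step B Δ none B' (Function.update Δ p T')
  | input {B : Buffer R M} {Δ : Session R M V} {T' : PST R M V}
      (α : Interaction R M) (B' : Buffer R M) :
      CanIn (Δ α.receiver) α.senders α.msg T' →
      (∀ q ∈ α.senders, B q α.receiver = α.msg :: B' q α.receiver) →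
      (∀ s r, ¬(s ∈ α.senders ∧ r = α.receiver) → B' s r = B s r) →
      Step B Δ (some α) B' (Function.update Δ α.receiver T')

/-- Finite reduction sequences; the trace records the labels of the input steps, in order. -/
inductive Steps [DecidableEq R] [DecidableEq V] :
    Buffer R M → Session R M V → Trace R M → Buffer R M → Session R M V → Prop
  | refl {B : Buffer R M} {Δ : Session R M V} : Steps B Δ [] B Δ
  | tau {B B' B'' : Buffer R M} {Δ Δ' Δ'' : Session R M V} {φ : Trace R M} :
      Step B Δ none B' Δ' → Steps B' Δ' φ B'' Δ'' → Steps B Δ φ B'' Δ''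
  | act {B B' B'' : Buffer R M} {Δ Δ' Δ'' : Session R M V} {α : Interaction R M}
      {φ : Trace R M} :
      Step B Δ (some α) B' Δ' → Steps B' Δ' φ B'' Δ'' → Steps B Δ (α :: φ) B'' Δ''

/-- A live session: every reachable configuration can reach a configuration with empty
buffer where every participant has successfully terminated. -/
def Live [DecidableEq R] [DecidableEq V] (Δ : Session R M V) : Prop :=
  ∀ φ B' Δ', Steps emptyBuf Δ φ B' Δ' →
    ∃ ψ Δ'', Steps B' Δ' ψ emptyBuf Δ'' ∧ Ended Δ''

/-- Traces of a session (empty if the session is not live). -/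
def trS [DecidableEq R] [DecidableEq V] (Δ : Session R M V) : Lang R M :=
  {φ | Live Δ ∧ ∃ Δ'', Steps emptyBuf Δ φ emptyBuf Δ'' ∧ Ended Δ''}

/-- The environment transformation performed by projecting a single interaction. -/
def actionUpd [DecidableEq R] (α : Interaction R M) (Δ : Session R M V) : Session R M V :=
  fun r =>
    if r = α.receiver then PST.inp α.senders α.msg (Δ r)
    else if r ∈ α.senders then PST.out α.receiver α.msg (Δ r)
    else Δ r

/-- The semantic projection judgment `Δ ⊢ G : Δ'`. -/
inductive SP [DecidableEq R] [DecidableEq V] :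
    Session R M V → GlobalType R M → Session R M V → Prop
  | skip {Δ : Session R M V} : SP Δ .skip Δ
  | action {Δ : Session R M V} (α : Interaction R M) : SP Δ (.act α) (actionUpd α Δ)
  | seq {Δ Δ' Δ'' : Session R M V} {g₁ g₂ : GlobalType R M} :
      SP Δ g₂ Δ' → SP Δ' g₁ Δ'' → SP Δ (.seq g₁ g₂) Δ''
  | alt {Δ Δ₁ Δ₂ : Session R M V} {g₁ g₂ : GlobalType R M} (p : R) :
      SP Δ g₁ Δ₁ → SP Δ g₂ Δ₂ → (∀ q, q ≠ p → Δ₁ q = Δ₂ q) →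
      SP Δ (.alt g₁ g₂) (Function.update Δ₁ p (PST.ichoice (Δ₁ p) (Δ₂ p)))
  | iter {Δ : Session R M V} {g : GlobalType R M} (p : R) (T₁ T₂ : PST R M V) :
      SP (Function.update Δ p (PST.ichoice T₁ T₂)) g (Function.update Δ p T₁) →
      SP (Function.update Δ p T₂) (.star g) (Function.update Δ p (PST.ichoice T₁ T₂))
  | subsume {Δ Δ' Δ'' : Session R M V} {g g' : GlobalType R M} :
      SP Δ g' Δ' →
      trG g' ⊆ trG g → trG g ⊆ perm (trG g') →
      trS Δ'' ⊆ trS Δ' → trS Δ' ⊆ perm (trS Δ'') →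
      SP Δ g Δ''

/-- The projection of a global type from the initial environment assigning `end`
to every participant. -/
def SProot [DecidableEq R] [DecidableEq V] (g : GlobalType R M) (Δ : Session R M V) : Prop :=
  SP (fun _ => PST.done) g Δ

/-- `OccInp p a T`: an input prefix `p?a` occurs (syntactically) in `T`. -/
inductive OccInp (p : R) (a : M) : PST R M V → Prop
  | here {s : Finset R} {T : PST R M V} : p ∈ s → OccInp p a (.inp s a T)
  | inp {s : Finset R} {b : M} {T : PST R M V} : OccInp p a T → OccInp p a (.inp s b T)
  | out {q : R} {b : M} {T : PST R M V} : OccInp p a T → OccInp p a (.out q b T)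
  | ichoiceL {T S : PST R M V} : OccInp p a T → OccInp p a (.ichoice T S)
  | ichoiceR {T S : PST R M V} : OccInp p a S → OccInp p a (.ichoice T S)
  | echoiceL {T S : PST R M V} : OccInp p a T → OccInp p a (.echoice T S)
  | echoiceR {T S : PST R M V} : OccInp p a S → OccInp p a (.echoice T S)
  | mu {X : V} {T : PST R M V} : OccInp p a T → OccInp p a (.mu X T)

/-- One step of the compatibility relation, relative to a set `K` of types already
assumed compatible with the input `p?a`. -/
def CompatStep [DecidableEq V] (p : R) (a : M) (K : Set (PST R M V)) (T : PST R M V) : Prop :=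
  (¬ OccInp p a T) ∨
  ((∃ q b T', CanOut T q b T') ∧ ∀ q b T', CanOut T q b T' → T' ∈ K) ∨
  ((∃ s b T', CanIn T s b T') ∧
    ∀ s b T', CanIn T s b T' → (p ∈ s ∧ a ≠ b) ∨ (p ∉ s ∧ T' ∈ K))

/-- The input `p?a` is compatible with the session type `T` (greatest fixed point). -/
def Compat [DecidableEq V] (p : R) (a : M) (T : PST R M V) : Prop :=
  ∃ K : Set (PST R M V), T ∈ K ∧ ∀ U ∈ K, CompatStep p a K U

/-- The input `s?a` is compatible with `T` if `p?a` is compatible with `T` for some `p ∈ s`. -/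
def CompatIn [DecidableEq V] (s : Finset R) (a : M) (T : PST R M V) : Prop :=
  ∃ p ∈ s, Compat p a T

/-- Output case of one step of the merge relation. -/
def MergeStepOut [DecidableEq V] (K : Set (PST R M V × PST R M V × PST R M V))
    (T S U : PST R M V) : Prop :=
  (∃ p a T', CanOut T p a T') ∧
  (∀ p a, (∃ T', CanOut T p a T') ↔ (∃ S', CanOut S p a S')) ∧
  (∀ p a, (∃ T', CanOut T p a T') ↔ (∃ U', CanOut U p a U')) ∧
  (∀ p a T' S' U', CanOut T p a T' → CanOut S p a S' → CanOut U p a U' → (T', S', U') ∈ K)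

/-- Input case of one step of the merge relation: `T` and `S` are compatible external
choices and `U` combines the common branches (merged) with the residual branches of
each side. -/
def MergeStepIn [DecidableEq V] (K : Set (PST R M V × PST R M V × PST R M V))
    (T S U : PST R M V) : Prop :=
  (∃ s a T', CanIn T s a T') ∧
  (∃ s a S', CanIn S s a S') ∧
  (∀ s a T', CanIn T s a T' → (∃ S', CanIn S s a S') ∨ CompatIn s a S) ∧
  (∀ s a S', CanIn S s a S' → (∃ T', CanIn T s a T') ∨ CompatIn s a T) ∧
  (∀ s a, (∃ U', CanIn U s a U') ↔ ((∃ T', CanIn T s a T') ∨ (∃ S', CanIn S s a S'))) ∧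
  (∀ s a T' S' U', CanIn T s a T' → CanIn S s a S' → CanIn U s a U' → (T', S', U') ∈ K) ∧
  (∀ s a T' U', CanIn T s a T' → ¬(∃ S', CanIn S s a S') → CanIn U s a U' → U' = T') ∧
  (∀ s a S' U', CanIn S s a S' → ¬(∃ T', CanIn T s a T') → CanIn U s a U' → U' = S')

/-- One step of the merge relation. -/
def MergeStep [DecidableEq V] (K : Set (PST R M V × PST R M V × PST R M V))
    (T S U : PST R M V) : Prop :=
  (T = PST.done ∧ S = PST.done ∧ U = PST.done) ∨
  (∃ X, T = PST.var X ∧ S = PST.var X ∧ U = PST.var X) ∨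
  MergeStepOut K T S U ∨ MergeStepIn K T S U

/-- `MergeST T S U`: `U` is the merge `T ⋈ S` (coinductively, as greatest fixed point). -/
def MergeST [DecidableEq V] (T S U : PST R M V) : Prop :=
  ∃ K : Set (PST R M V × PST R M V × PST R M V), (T, S, U) ∈ K ∧
    ∀ x ∈ K, MergeStep K x.1 x.2.1 x.2.2

/-- The algorithmic projection judgment `Δ ⊢A G : Δ'`. -/
inductive AP [DecidableEq R] [DecidableEq V] :
    Session R M V → GlobalType R M → Session R M V → Prop
  | skip {Δ : Session R M V} : AP Δ .skip Δ
  | action {Δ : Session R M V} (α : Interaction R M) : AP Δ (.act α) (actionUpd α Δ)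
  | seq {Δ Δ' Δ'' : Session R M V} {g₁ g₂ : GlobalType R M} :
      AP Δ g₂ Δ' → AP Δ' g₁ Δ'' → AP Δ (.seq g₁ g₂) Δ''
  | alt {Δ Δ₁ Δ₂ : Session R M V} {g₁ g₂ : GlobalType R M} (p : R) (Δm : Session R M V) :
      AP Δ g₁ Δ₁ → AP Δ g₂ Δ₂ →
      (∀ q, q ≠ p → MergeST (Δ₁ q) (Δ₂ q) (Δm q)) →
      AP Δ (.alt g₁ g₂) (Function.update Δm p (PST.ichoice (Δ₁ p) (Δ₂ p)))
  | iter {Δ : Session R M V} {g : GlobalType R M}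
      (p : R) (I : Finset R) (X : V) (Xv : R → V)
      (T S : PST R M V) (Ti Si Mi : R → PST R M V)
      (hpI : p ∉ I)
      (hinj : ∀ q ∈ I, ∀ q' ∈ I, Xv q = Xv q' → q = q')
      (hXXv : ∀ q ∈ I, X ≠ Xv q)
      (hXT : X ∉ fv T) (hXTi : ∀ q ∈ I, X ∉ fv (Ti q)) (hXΔ : ∀ r, X ∉ fv (Δ r))
      (hXvT : ∀ q ∈ I, Xv q ∉ fv T) (hXvTi : ∀ q ∈ I, ∀ q' ∈ I, Xv q ∉ fv (Ti q'))
      (hXvΔ : ∀ q ∈ I, ∀ r, Xv q ∉ fv (Δ r))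
      (hmerge : ∀ q ∈ I, MergeST (Ti q) (Si q) (Mi q)) :
      AP (fun r => if r = p then PST.var X else if r ∈ I then PST.var (Xv r) else Δ r) g
         (fun r => if r = p then S else if r ∈ I then Si r else Δ r) →
      AP (fun r => if r = p then T else if r ∈ I then Ti r else Δ r) (.star g)
         (fun r => if r = p then PST.mu X (PST.ichoice T S)
                   else if r ∈ I then PST.mu (Xv r) (Mi r) else Δ r)

/-- The algorithmic projection of a global type from the initial environment
assigning `end` to every participant. -/
def AProot [DecidableEq R] [DecidableEq V] (g : GlobalType R M) (Δ : Session R M V) : Prop :=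
  AP (fun _ => PST.done) g Δ

/-- A substitution mapping every recursion variable to a closed session type. -/
def ClosedSTSubst [DecidableEq V] (ρ : V → PST R M V) : Prop :=
  ∀ X, fv (ρ X) = ∅ ∧ IsST (ρ X)

/-- Pointwise application of a substitution to a session environment. -/
def applySub [DecidableEq V] (ρ : V → PST R M V) (Δ : Session R M V) : Session R M V :=
  fun p => substAll ρ (Δ p)

/-- Implementation pre-order: `ipre L' L` means `L' ⊑ L`, i.e. `L ⊆ L' ⊆ perm L`. -/
def ipre (L' L : Lang R M) : Prop := L ⊆ L' ∧ L' ⊆ perm L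

/-- A language is regular if it is accepted by a DFA with finitely many states. -/
def IsRegularL (L : Lang R M) : Prop :=
  ∃ (σ : Type) (_ : Fintype σ) (dfa : DFA (Interaction R M) σ), dfa.accepts = L


lemma subset_closure {L : Lang R M} : L ⊆ closure L :=
  fun _ hw _ hLK _ => hLK hw

lemma closure_mono {L L' : Lang R M} (h : L ⊆ L') : closure L ⊆ closure L' :=
  fun _ hw K hK hwf => hw K (h.trans hK) hwf

lemma perm_mono {L L' : Lang R M} (h : L ⊆ L') : perm L ⊆ perm L' :=
  fun _ ⟨v, hv, hp⟩ => ⟨v, h hv, hp⟩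

lemma perm_trans {L : Lang R M} : perm (perm L) ⊆ perm L :=
  fun _ ⟨v, ⟨u, hu, hvu⟩, hp⟩ => ⟨u, hu, hp.trans hvu⟩

lemma perm_wf (L : Lang R M) : WellFormedL (perm L) := by
  intro φ ψ α β hmem
  right
  obtain ⟨v, hv, hp⟩ := hmem
  exact ⟨v, hv, ((List.Perm.append_left φ (List.Perm.swap α β ψ)).trans hp)⟩

lemma closure_subset_perm {L : Lang R M} : closure L ⊆ perm L :=
  fun w hw => hw (perm L) (fun v hv => ⟨v, hv, List.Perm.refl v⟩) (perm_wf L)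

lemma catL_mono_left {L L' K : Lang R M} (h : L ⊆ L') : catL L K ⊆ catL L' K := by
  rintro w ⟨v₁, hv₁, v₂, hv₂, rfl⟩
  exact ⟨v₁, h hv₁, v₂, hv₂, rfl⟩

lemma catL_perm_left {L L' K : Lang R M} (h : L ⊆ perm L') :
    catL L K ⊆ perm (catL L' K) := by
  rintro w ⟨v₁, hv₁, v₂, hv₂, rfl⟩
  obtain ⟨u, hu, hp⟩ := h hv₁
  exact ⟨u ++ v₂, ⟨u, hu, v₂, hv₂, rfl⟩, hp.append_right v₂⟩

/-- the implementation pre-order is preserved by closure of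
left concatenation. -/
theorem ipre_closure_cat_left
    {R M : Type} (L₁ L₂ L₃ L₄ : Lang R M)
    (h₁ : ipre L₂ L₁) (h₂ : ipre (closure (catL L₁ L₄)) L₃) :
    ipre (closure (catL L₂ L₄)) L₃ := by
  obtain ⟨h12, h21⟩ := h₁
  obtain ⟨h3c, hc3⟩ := h₂
  constructor
  · exact h3c.trans (closure_mono (catL_mono_left h12))
  · have h1 : catL L₁ L₄ ⊆ perm L₃ := subset_closure.trans hc3
    have h2 : catL L₂ L₄ ⊆ perm L₃ :=
      (catL_perm_left h21).trans ((perm_mono h1).trans perm_trans)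
    exact closure_subset_perm.trans ((perm_mono h2).trans perm_trans)

end MultiPartySessions
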